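/- A tree T on n ≥ 2 vertices is square-stable if and only if T has a perfect matching consisting of pendant edges. -/

import Mathlib

open SimpleGraph

/-- The square of a graph: vertices adjacent iff at distance 1 or 2 in `G`. -/
def SimpleGraph.sq {V : Type*} (G : SimpleGraph V) : SimpleGraph V where
  Adj u v := G.Adj u v ∨ (u ≠ v ∧ ∃ w, G.Adj u w ∧ G.Adj w v)
  symm := by
    constructor
    rintro u v (h | ⟨hne, w, h1, h2⟩)
    · exact Or.inl h.symm
    · exact Or.inr ⟨hne.symm, w, h2.symm, h1.symm⟩
  loopless := by
    constructor
    rintro u (h | ⟨hne, _⟩)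
    · exact G.irrefl h
    · exact hne rfl

/-- A stable (independent) set of vertices. -/
def SimpleGraph.IsStableSet {V : Type*} (G : SimpleGraph V) (s : Set V) : Prop :=
  s.Pairwise fun u v => ¬ G.Adj u v

/-- The stability (independence) number. -/
noncomputable def SimpleGraph.alpha {V : Type*} (G : SimpleGraph V) : ℕ :=
  sSup {n | ∃ s : Finset V, G.IsStableSet ↑s ∧ s.card = n}

/-- The matching number: maximum number of edges in a matching. -/
noncomputable def SimpleGraph.mu {V : Type*} (G : SimpleGraph V) : ℕ :=
  sSup {n | ∃ M : G.Subgraph, M.IsMatching ∧ M.edgeSet.ncard = n}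

/-- `s` is a maximum stable set. -/
def SimpleGraph.IsMaximumStable {V : Type*} (G : SimpleGraph V) (s : Finset V) : Prop :=
  G.IsStableSet ↑s ∧ s.card = G.alpha

/-- `s` is a maximal stable set. -/
def SimpleGraph.IsMaximalStable {V : Type*} (G : SimpleGraph V) (s : Finset V) : Prop :=
  G.IsStableSet ↑s ∧ ∀ v ∉ s, ¬ G.IsStableSet (insert v (↑s : Set V))

/-- `G` is square-stable if `α(G) = α(G²)`. -/
def SimpleGraph.SquareStable {V : Type*} (G : SimpleGraph V) : Prop :=
  G.alpha = G.sq.alpha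

/-- König-Egerváry graph: `α(G) + μ(G) = |V(G)|`. -/
def SimpleGraph.KonigEgervary {V : Type*} [Fintype V] (G : SimpleGraph V) : Prop :=
  G.alpha + G.mu = Fintype.card V

/-- A pendant vertex: a vertex of degree 1. -/
def SimpleGraph.Pendant {V : Type*} (G : SimpleGraph V) (v : V) : Prop :=
  (G.neighborSet v).ncard = 1

/-- `G` has a perfect matching consisting of pendant edges. -/
def SimpleGraph.HasPendantPerfectMatching {V : Type*} (G : SimpleGraph V) : Prop :=
  ∃ M : G.Subgraph, M.IsPerfectMatching ∧ ∀ e ∈ M.edgeSet, ∃ v ∈ e, G.Pendant v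

/-- A simplicial vertex: its neighborhood induces a clique. -/
def SimpleGraph.IsSimplicial {V : Type*} (G : SimpleGraph V) (v : V) : Prop :=
  G.IsClique (G.neighborSet v)

/-- `G` is well-covered: every maximal stable set is maximum. -/
def SimpleGraph.WellCovered {V : Type*} (G : SimpleGraph V) : Prop :=
  ∀ s : Finset V, G.IsMaximalStable s → s.card = G.alpha

/-- `G` is very well-covered: well-covered, no isolated vertices, `|V| = 2α`. -/
def SimpleGraph.VeryWellCovered {V : Type*} [Fintype V] (G : SimpleGraph V) : Prop :=
  G.WellCovered ∧ (∀ v : V, (G.neighborSet v).ncard ≠ 0) ∧ Fintype.card V = 2 * G.alpha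

/-!
If `α(G) = α(G²)`, a maximum independent set `S` of `G²` is also a maximum independent set of `G`,
and no two of its vertices have a common neighbour. By maximality every vertex outside `S` then has
exactly one neighbour in `S`, and in a triangle-free graph every `u ∈ S` is a leaf: two neighbours
of `u` could replace `u` in `S`. The edges at `S` form the pendant perfect matching.

Conversely, choosing a leaf in every edge of a pendant perfect matching gives an independent set of
`G²` with one vertex per matching edge, while an independent set of `G` has at most one vertex per
matching edge.
-/

lemma Function.Involutive.exists_transversal {α : Type*} {p : α → α}
    (hp : Function.Involutive p) (hfix : ∀ a, p a ≠ a) {P : α → Prop}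
    (hP : ∀ a, P a ∨ P (p a)) : ∃ s : Set α, (∀ a, a ∈ s ↔ p a ∉ s) ∧ ∀ a ∈ s, P a := by
  have hchoice : ∀ e : Sym2 α, ∃ x ∈ e, (∃ y ∈ e, P y) → P x := fun e => by
    by_cases h : ∃ y ∈ e, P y
    · obtain ⟨y, hy, hPy⟩ := h
      exact ⟨y, hy, fun _ => hPy⟩
    · exact ⟨e.out.1, e.out_fst_mem, fun h' => absurd h' h⟩
  choose f hfmem hfP using hchoice
  refine ⟨{a | f s(a, p a) = a}, fun a => ?_, fun a ha => ?_⟩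
  · simp only [Set.mem_ofPred_eq, hp a, Sym2.eq_swap (a := p a)]
    rcases Sym2.mem_iff.1 (hfmem s(a, p a)) with h | h <;> rw [h]
    · simp [(hfix a).symm]
    · simp [hfix a]
  · rw [← ha]
    exact hfP _ ((hP a).elim (fun h => ⟨a, Sym2.mem_mk_left _ _, h⟩)
      fun h => ⟨p a, Sym2.mem_mk_right _ _, h⟩)

namespace SimpleGraph

variable {V : Type*} {G : SimpleGraph V}

lemma alpha_eq_indepNum (G : SimpleGraph V) : G.alpha = G.indepNum := by
  simp only [alpha, indepNum, isNIndepSet_iff]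
  rfl

lemma le_sq (G : SimpleGraph V) : G ≤ G.sq := fun _ _ h => Or.inl h

lemma IsIndepSet.of_sq {s : Set V} (hs : G.sq.IsIndepSet s) : G.IsIndepSet s :=
  hs.mono' fun _ _ h hadj => h (G.le_sq hadj)

lemma isIndepSet_insert {a : V} {s : Set V} :
    G.IsIndepSet (insert a s) ↔ G.IsIndepSet s ∧ ∀ b ∈ s, ¬G.Adj a b := by
  rw [← isClique_compl, isClique_insert, isClique_compl]
  refine and_congr_right fun _ => forall₂_congr fun b _ => ?_
  by_cases hab : a = b <;> simp [hab]

lemma IsIndepSet.ncard_le_indepNum [Finite V] {s : Set V} (hs : G.IsIndepSet s) :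
    s.ncard ≤ G.indepNum := by
  rw [← s.toFinite.coe_toFinset] at hs ⊢
  rw [Set.ncard_coe_finset]
  exact hs.card_le_indepNum

lemma squareStable_iff [Finite V] : G.SquareStable ↔ G.indepNum ≤ G.sq.indepNum := by
  obtain ⟨s, hs⟩ := G.sq.maximumIndepSet_exists
  have hle := hs.isIndepSet.of_sq.card_le_indepNum
  rw [SquareStable, alpha_eq_indepNum, alpha_eq_indepNum, ← maximumIndepSet_card_eq_indepNum s hs]
  omega

lemma IsMaximumIndepSet.exists_adj_mem [Finite V] {s : Finset V} (hs : G.IsMaximumIndepSet s)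
    {v : V} (hv : v ∉ s) : ∃ u ∈ s, G.Adj u v := by
  classical
  by_contra! hno
  have hins : G.IsIndepSet ↑(insert v s) := by
    rw [Finset.coe_insert, isIndepSet_insert]
    exact ⟨hs.isIndepSet, fun u hu huv => hno u hu huv.symm⟩
  have hcard := hs.maximum _ hins
  rw [Finset.card_insert_of_notMem hv] at hcard
  omega

lemma IsIndepSet.eq_of_adj_of_adj {s : Set V} (hs : G.sq.IsIndepSet s) {u u' v : V}
    (hu : u ∈ s) (hu' : u' ∈ s) (huv : G.Adj u v) (hu'v : G.Adj u' v) : u = u' := by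
  by_contra hne
  exact hs hu hu' hne (Or.inr ⟨hne, v, huv, hu'v.symm⟩)

lemma IsMaximumIndepSet.neighborSet_subsingleton [Finite V] (hG : G.CliqueFree 3)
    {s : Finset V} (hs : G.IsMaximumIndepSet s) (hsq : G.sq.IsIndepSet ↑s) {u : V} (hu : u ∈ s) :
    (G.neighborSet u).Subsingleton := by
  classical
  intro w hw w' hw'
  by_contra hne
  have hnotMem : ∀ x, G.Adj u x → x ∉ s := fun x hx hxs =>
    hs.isIndepSet hu hxs hx.ne hx
  have hfar : ∀ x, G.Adj u x → ∀ y ∈ s.erase u, ¬G.Adj x y := fun x hx y hy hxy =>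
    (Finset.mem_erase.1 hy).1 (hsq.eq_of_adj_of_adj (Finset.mem_erase.1 hy).2 hu hxy.symm hx)
  have hww' : ¬G.Adj w' w := isIndepSet_neighborSet_of_triangleFree G hG u hw' hw (Ne.symm hne)
  have hind : G.IsIndepSet ↑(insert w' (insert w (s.erase u))) := by
    simp only [Finset.coe_insert, isIndepSet_insert, Set.mem_insert_iff, Finset.mem_coe,
      forall_eq_or_imp]
    exact ⟨⟨hs.isIndepSet.mono (Finset.erase_subset u s), hfar w hw⟩, hww', hfar w' hw'⟩
  have hcard := hs.maximum _ hind
  rw [Finset.card_insert_of_notMem, Finset.card_insert_of_notMem (fun h => hnotMem w hw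
    (Finset.mem_of_mem_erase h)), Finset.card_erase_of_mem hu] at hcard
  · have hpos := Finset.card_pos.2 ⟨u, hu⟩
    omega
  · simp only [Finset.mem_insert, Finset.mem_erase, not_or]
    exact ⟨Ne.symm hne, fun h => hnotMem w' hw' h.2⟩

lemma hasPendantPerfectMatching_of_neighborSet_eq_singleton {s : Set V}
    (hleaf : ∀ u ∈ s, ∃ w, G.neighborSet u = {w}) (hcover : ∀ v ∉ s, ∃! u, u ∈ s ∧ G.Adj u v) :
    G.HasPendantPerfectMatching := by
  let M : G.Subgraph :=
    { verts := Set.univ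
      Adj := fun x y => G.Adj x y ∧ (x ∈ s ∨ y ∈ s)
      adj_sub := And.left
      edge_vert := fun _ => trivial
      symm := ⟨fun _ _ h => ⟨h.1.symm, h.2.symm⟩⟩ }
  refine ⟨M, Subgraph.isPerfectMatching_iff.2 fun v => ?_, ?_⟩
  · by_cases hv : v ∈ s
    · obtain ⟨w, hw⟩ := hleaf v hv
      have hvw : ∀ y, G.Adj v y ↔ y = w := fun y => Set.ext_iff.1 hw y
      exact ⟨w, ⟨(hvw w).2 rfl, .inl hv⟩, fun y hy => (hvw y).1 hy.1⟩
    · obtain ⟨u, ⟨hu, huv⟩, huniq⟩ := hcover v hv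
      refine ⟨u, ⟨huv.symm, .inr hu⟩, fun y hy => huniq y ⟨?_, hy.1.symm⟩⟩
      exact hy.2.resolve_left hv
  · rintro ⟨x, y⟩ ⟨-, hx | hy⟩
    · obtain ⟨w, hw⟩ := hleaf x hx
      exact ⟨x, Sym2.mem_mk_left x y, by rw [Pendant, hw, Set.ncard_singleton]⟩
    · obtain ⟨w, hw⟩ := hleaf y hy
      exact ⟨y, Sym2.mem_mk_right x y, by rw [Pendant, hw, Set.ncard_singleton]⟩

theorem SquareStable.hasPendantPerfectMatching [Finite V] (hG : G.CliqueFree 3)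
    (hiso : ∀ v, ¬G.IsIsolated v) (h : G.SquareStable) : G.HasPendantPerfectMatching := by
  obtain ⟨s, hsq⟩ := G.sq.maximumIndepSet_exists
  have hs : G.IsMaximumIndepSet s := by
    refine ⟨hsq.isIndepSet.of_sq, fun t ht => ?_⟩
    rw [maximumIndepSet_card_eq_indepNum s hsq]
    exact ht.card_le_indepNum.trans (squareStable_iff.1 h)
  refine hasPendantPerfectMatching_of_neighborSet_eq_singleton (s := ↑s)
    (fun u hu => ?_) (fun v hv => ?_)
  · obtain ⟨w, hw⟩ := exists_adj_iff_not_isIsolated.2 (hiso u)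
    exact ⟨w, (hs.neighborSet_subsingleton hG hsq.isIndepSet hu).eq_singleton_of_mem hw⟩
  · obtain ⟨u, hu, huv⟩ := hs.exists_adj_mem hv
    exact ⟨u, ⟨hu, huv⟩, fun u' hu' => hsq.isIndepSet.eq_of_adj_of_adj hu'.1 hu hu'.2 huv⟩

lemma Pendant.neighborSet_eq {v w : V} (hv : G.Pendant v) (hvw : G.Adj v w) :
    G.neighborSet v = {w} := by
  obtain ⟨a, ha⟩ := Set.ncard_eq_one.1 hv
  have hw : w ∈ G.neighborSet v := hvw
  rw [ha, Set.mem_singleton_iff] at hw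
  rwa [hw]

lemma HasPendantPerfectMatching.exists_involutive (h : G.HasPendantPerfectMatching) :
    ∃ p : V → V, Function.Involutive p ∧ (∀ v, G.Adj v (p v)) ∧
      ∀ v, G.Pendant v ∨ G.Pendant (p v) := by
  obtain ⟨M, hM, hpend⟩ := h
  choose p hp using Subgraph.isPerfectMatching_iff.1 hM
  refine ⟨p, fun v => ((hp (p v)).2 v (hp v).1.symm).symm, fun v => M.adj_sub (hp v).1,
    fun v => ?_⟩
  obtain ⟨x, hx, hxp⟩ := hpend s(v, p v) (hp v).1
  rcases Sym2.mem_iff.1 hx with rfl | rfl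
  exacts [.inl hxp, .inr hxp]

lemma isIndepSet_sq_of_neighborSet_eq_singleton {p : V → V} (hp : p.Injective) {s : Set V}
    (hs : ∀ v ∈ s, G.neighborSet v = {p v} ∧ p v ∉ s) : G.sq.IsIndepSet s := by
  have hnbr : ∀ v ∈ s, ∀ w, G.Adj v w → w = p v := fun v hv w h =>
    (Set.ext_iff.1 (hs v hv).1 w).1 h
  rintro a ha b hb hab (h | ⟨-, w, haw, hwb⟩)
  · exact (hs a ha).2 (hnbr a ha b h ▸ hb)
  · exact hab (hp ((hnbr a ha w haw).symm.trans (hnbr b hb w hwb.symm)))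

lemma IsIndepSet.ncard_le_of_involutive [Finite V] {p : V → V} (hp : Function.Involutive p)
    (hadj : ∀ v, G.Adj v (p v)) {s t : Set V} (hs : ∀ v, v ∈ s ↔ p v ∉ s)
    (ht : G.IsIndepSet t) : t.ncard ≤ s.ncard := by
  classical
  have hnp : ∀ a ∈ t, ∀ b ∈ t, a ≠ p b := fun a ha b hb h => by
    subst h
    exact ht hb ha (hadj b).ne (hadj b)
  refine Set.ncard_le_ncard_of_injOn (fun v => if v ∈ s then v else p v) (fun v _ => ?_) ?_
  · split_ifs with hv
    · exact hv
    · rwa [hs, hp v]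
  · intro a ha b hb hab
    by_cases has : a ∈ s <;> by_cases hbs : b ∈ s <;>
      simp only [has, hbs, if_true, if_false] at hab
    · exact hab
    · exact absurd hab (hnp a ha b hb)
    · exact absurd hab.symm (hnp b hb a ha)
    · exact hp.injective hab

theorem HasPendantPerfectMatching.squareStable [Finite V] (h : G.HasPendantPerfectMatching) :
    G.SquareStable := by
  obtain ⟨p, hp, hadj, hpend⟩ := h.exists_involutive
  obtain ⟨s, hs, hleaf⟩ := hp.exists_transversal (fun v => (hadj v).ne.symm) hpend
  have hsq : G.sq.IsIndepSet s := isIndepSet_sq_of_neighborSet_eq_singleton hp.injective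
    fun v hv => ⟨(hleaf v hv).neighborSet_eq (hadj v), (hs v).1 hv⟩
  obtain ⟨t, ht⟩ := G.maximumIndepSet_exists
  rw [squareStable_iff, ← maximumIndepSet_card_eq_indepNum t ht, ← Set.ncard_coe_finset]
  exact (ht.isIndepSet.ncard_le_of_involutive hp hadj hs).trans hsq.ncard_le_indepNum

end SimpleGraph

theorem stmt13 {V : Type*} [Fintype V] (T : SimpleGraph V) (ht : T.IsTree)
    (h2 : 2 ≤ Fintype.card V) :
    T.SquareStable ↔ T.HasPendantPerfectMatching := by
  have : Nontrivial V := Fintype.one_lt_card_iff_nontrivial.1 h2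
  exact ⟨SquareStable.hasPendantPerfectMatching (ht.isAcyclic.cliqueFree le_rfl)
    ht.connected.preconnected.not_isIsolated, HasPendantPerfectMatching.squareStable⟩
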